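/- Let $a_n,b_n:\mathbb{R}\to\mathbb{R}$ be differentiable solutions of the Toda lattice with $a_n(t)\neq 0$ for all $n,t$, let $\lambda\in\mathbb{R}$, and let $P_n(t)$, $Q_n(t)$ ($n\in\mathbb{Z}$) be the solutions of the recurrence $a_{n-1}(t)y_{n-1}+b_n(t)y_n+a_n(t)y_{n+1}=\lambda y_n$ with $P_{-1}(t)=0$, $P_0(t)=1$ and $Q_0(t)=0$, $Q_1(t)=1/a_0(t)$. Then for every $n\in\mathbb{Z}$ and every $t$: $\frac{d}{dt}P_n - \big(\tfrac12 a_n P_{n+1}-\tfrac12 a_{n-1}P_{n-1}\big) = \frac{b_0(t)-\lambda}{2}\,P_n + a_{-1}(t)^2\,Q_n$. -/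

import Mathlib

/-!
Write `J` for the Jacobi operator `(J y)ₙ = aₙ₋₁ yₙ₋₁ + bₙ yₙ + aₙ yₙ₊₁`. The Toda equations are
the Lax equation `J̇ = [A, J]`, so differentiating `(J - λ) P = 0` in time gives
`(J - λ) Ṗ = -[A, J] P = (J - λ) A P`: the sequence `Ṗ - A P` solves the eigenvalue equation, and
so does `Ṗ - A P - ((b₀ - λ)/2) P - a₋₁² Q`. The normalizations of `P` and `Q` make the latter
vanish at `n = -1` and `n = 0`, and a solution of a three-term recurrence with nonzero
off-diagonal coefficients that vanishes at two consecutive indices vanishes identically.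
-/

section Jacobi

variable {K : Type*}

def IsJacobiSolution [CommRing K] (a b : ℤ → K) (lam : K) (y : ℤ → K) : Prop :=
  ∀ n, a (n - 1) * y (n - 1) + b n * y n + a n * y (n + 1) = lam * y n

namespace IsJacobiSolution

variable {a b y z : ℤ → K} {lam : K}

theorem sub [CommRing K] (hy : IsJacobiSolution a b lam y) (hz : IsJacobiSolution a b lam z) :
    IsJacobiSolution a b lam (y - z) := fun n => by
  simp only [Pi.sub_apply]
  linear_combination hy n - hz n

theorem const_smul [CommRing K] (c : K) (hy : IsJacobiSolution a b lam y) :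
    IsJacobiSolution a b lam (c • y) := fun n => by
  simp only [Pi.smul_apply, smul_eq_mul]
  linear_combination c * hy n

theorem eq_zero_of_eq_zero_of_eq_zero [CommRing K] [IsDomain K] (ha : ∀ n, a n ≠ 0)
    (hy : IsJacobiSolution a b lam y) {m : ℤ} (hm : y m = 0) (hm' : y (m + 1) = 0) (n : ℤ) :
    y n = 0 := by
  suffices y n = 0 ∧ y (n + 1) = 0 from this.1
  induction n using Int.inductionOn' (b := m) with
  | zero => exact ⟨hm, hm'⟩
  | succ k _ ih =>
    have h := hy (k + 1)
    rw [add_sub_cancel_right, ih.1, ih.2] at h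
    refine ⟨ih.2, (mul_eq_zero.mp ?_).resolve_left (ha (k + 1))⟩
    linear_combination h
  | pred k _ ih =>
    have h := hy k
    rw [ih.1, ih.2] at h
    refine ⟨(mul_eq_zero.mp ?_).resolve_left (ha (k - 1)), by rw [sub_add_cancel]; exact ih.1⟩
    linear_combination h

end IsJacobiSolution

def todaA [Field K] (a y : ℤ → K) (n : ℤ) : K :=
  1 / 2 * a n * y (n + 1) - 1 / 2 * a (n - 1) * y (n - 1)

/-- Here `a'`, `b'`, `y'` play the role of the time derivatives of `a`, `b`, `y`, and `hy'` is the
derivative of the recurrence for `y`. -/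
theorem IsJacobiSolution.sub_todaA [Field K] [NeZero (2 : K)] {a b a' b' y y' : ℤ → K} {lam : K}
    (ha' : ∀ n, a' n = a n / 2 * (b (n + 1) - b n))
    (hb' : ∀ n, b' n = a n ^ 2 - a (n - 1) ^ 2)
    (hy : IsJacobiSolution a b lam y)
    (hy' : ∀ n, a' (n - 1) * y (n - 1) + a (n - 1) * y' (n - 1) + (b' n * y n + b n * y' n)
      + (a' n * y (n + 1) + a n * y' (n + 1)) = lam * y' n) :
    IsJacobiSolution a b lam (y' - todaA a y) := fun n => by
  have e := hy' n
  have e_pred := hy (n - 1)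
  have e_succ := hy (n + 1)
  rw [ha' (n - 1), ha' n, hb' n] at e
  simp only [Pi.sub_apply, todaA, sub_add_cancel, add_sub_cancel_right] at e e_pred e_succ ⊢
  have h2 : (2 : K)⁻¹ * 2 = 1 := inv_mul_cancel₀ two_ne_zero
  linear_combination e + a (n - 1) / 2 * e_pred - a n / 2 * e_succ
    + (a n ^ 2 - a (n - 1) ^ 2) * y n * h2

end Jacobi

theorem deriv_jacobi_recurrence {a b P : ℤ → ℝ → ℝ} {lam : ℝ}
    (ha : ∀ n, Differentiable ℝ (a n)) (hb : ∀ n, Differentiable ℝ (b n))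
    (hP : ∀ n, Differentiable ℝ (P n))
    (hrec : ∀ t, IsJacobiSolution (a · t) (b · t) lam (P · t)) (n : ℤ) (t : ℝ) :
    deriv (a (n - 1)) t * P (n - 1) t + a (n - 1) t * deriv (P (n - 1)) t
      + (deriv (b n) t * P n t + b n t * deriv (P n) t)
      + (deriv (a n) t * P (n + 1) t + a n t * deriv (P (n + 1)) t) = lam * deriv (P n) t := by
  have h := (((ha (n - 1) t).hasDerivAt.mul (hP (n - 1) t).hasDerivAt).add
    ((hb n t).hasDerivAt.mul (hP n t).hasDerivAt)).add
    ((ha n t).hasDerivAt.mul (hP (n + 1) t).hasDerivAt)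
  rw [show a (n - 1) * P (n - 1) + b n * P n + a n * P (n + 1) = fun s => lam * P n s
    from funext fun s => hrec s n] at h
  exact h.unique ((hP n t).hasDerivAt.const_mul lam)

theorem isJacobiSolution_deriv_sub_todaA {a b P : ℤ → ℝ → ℝ} {lam : ℝ}
    (ha : ∀ n, Differentiable ℝ (a n)) (hb : ∀ n, Differentiable ℝ (b n))
    (htoda : ∀ n t, deriv (a n) t = a n t / 2 * (b (n + 1) t - b n t) ∧
      deriv (b n) t = a n t ^ 2 - a (n - 1) t ^ 2)
    (hP : ∀ n, Differentiable ℝ (P n))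
    (hrec : ∀ t, IsJacobiSolution (a · t) (b · t) lam (P · t)) (t : ℝ) :
    IsJacobiSolution (a · t) (b · t) lam
      (fun n => deriv (P n) t - todaA (a · t) (P · t) n) :=
  IsJacobiSolution.sub_todaA (fun n => (htoda n t).1) (fun n => (htoda n t).2) (hrec t)
    (deriv_jacobi_recurrence ha hb hP hrec · t)

theorem P_evolution_under_toda_flow_general
    (a b : ℤ → ℝ → ℝ)
    (ha : ∀ n : ℤ, Differentiable ℝ (a n))
    (hb : ∀ n : ℤ, Differentiable ℝ (b n))
    (htoda : ∀ (n : ℤ) (t : ℝ),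
      deriv (a n) t = a n t / 2 * (b (n + 1) t - b n t) ∧
      deriv (b n) t = (a n t) ^ 2 - (a (n - 1) t) ^ 2)
    (hane : ∀ (n : ℤ) (t : ℝ), a n t ≠ 0)
    (lam : ℝ)
    (P Q : ℤ → ℝ → ℝ)
    (hP : ∀ n : ℤ, Differentiable ℝ (P n))
    (hPrec : ∀ (n : ℤ) (t : ℝ),
      a (n - 1) t * P (n - 1) t + b n t * P n t + a n t * P (n + 1) t = lam * P n t)
    (hQrec : ∀ (n : ℤ) (t : ℝ),
      a (n - 1) t * Q (n - 1) t + b n t * Q n t + a n t * Q (n + 1) t = lam * Q n t)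
    (hPinit : ∀ t : ℝ, P (-1) t = 0 ∧ P 0 t = 1)
    (hQinit : ∀ t : ℝ, Q 0 t = 0 ∧ Q 1 t = 1 / a 0 t) :
    ∀ (n : ℤ) (t : ℝ),
      deriv (P n) t - ((1 / 2) * a n t * P (n + 1) t - (1 / 2) * a (n - 1) t * P (n - 1) t) =
        (b 0 t - lam) / 2 * P n t + (a (-1) t) ^ 2 * Q n t := by
  intro n t
  have hPsol : ∀ s, IsJacobiSolution (a · s) (b · s) lam (P · s) := fun s m => hPrec m s
  have hQsol : IsJacobiSolution (a · t) (b · t) lam (Q · t) := fun m => hQrec m t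
  have hR := ((isJacobiSolution_deriv_sub_todaA ha hb htoda hP hPsol t).sub
    ((hPsol t).const_smul ((b 0 t - lam) / 2))).sub (hQsol.const_smul (a (-1) t ^ 2))
  have hPconst (m : ℤ) (c : ℝ) (h : ∀ s, P m s = c) : deriv (P m) t = 0 := by
    simp [funext h]
  have hpm1 := hPrec (-1) t
  have hp0 := hPrec 0 t
  have hq0 := hQrec 0 t
  have hRn := hR.eq_zero_of_eq_zero_of_eq_zero (hane · t) (m := -1) ?at_neg_one ?at_zero n
  · simp only [Pi.sub_apply, Pi.smul_apply, smul_eq_mul, todaA] at hRn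
    linear_combination hRn
  all_goals
    norm_num [todaA, (hPinit t).1, (hPinit t).2, (hQinit t).1, (hQinit t).2,
      hPconst (-1) 0 fun s => (hPinit s).1, hPconst 0 1 fun s => (hPinit s).2] at hpm1 hp0 hq0 ⊢
  case at_neg_one =>
    field_simp [hane 0 t] at hq0
    linear_combination (1 / 2) * hpm1 - a (-1) t * hq0
  case at_zero => linear_combination (-1 / 2 : ℝ) * hp0

/-- For Toda flows, the polynomial solution `Pₙ(λ,t)` of the Jacobi eigenvalue equation
(normalized by `P₋₁ = 0`, `P₀ = 1`) satisfies
`d/dt Pₙ - (½ aₙ Pₙ₊₁ - ½ aₙ₋₁ Pₙ₋₁) = ((b₀ - λ)/2) Pₙ + a₋₁² Qₙ`. -/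
theorem P_evolution_under_toda_flow
    (a b : ℤ → ℝ → ℝ)
    (ha : ∀ n : ℤ, Differentiable ℝ (a n))
    (hb : ∀ n : ℤ, Differentiable ℝ (b n))
    (htoda : ∀ (n : ℤ) (t : ℝ),
      deriv (a n) t = a n t / 2 * (b (n + 1) t - b n t) ∧
      deriv (b n) t = (a n t) ^ 2 - (a (n - 1) t) ^ 2)
    (hane : ∀ (n : ℤ) (t : ℝ), a n t ≠ 0)
    (lam : ℝ)
    (P Q : ℤ → ℝ → ℝ)
    (hP : ∀ n : ℤ, Differentiable ℝ (P n))
    (hQ : ∀ n : ℤ, Differentiable ℝ (Q n))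
    (hPrec : ∀ (n : ℤ) (t : ℝ),
      a (n - 1) t * P (n - 1) t + b n t * P n t + a n t * P (n + 1) t = lam * P n t)
    (hQrec : ∀ (n : ℤ) (t : ℝ),
      a (n - 1) t * Q (n - 1) t + b n t * Q n t + a n t * Q (n + 1) t = lam * Q n t)
    (hPinit : ∀ t : ℝ, P (-1) t = 0 ∧ P 0 t = 1)
    (hQinit : ∀ t : ℝ, Q 0 t = 0 ∧ Q 1 t = 1 / a 0 t) :
    ∀ (n : ℤ) (t : ℝ),
      deriv (P n) t - ((1 / 2) * a n t * P (n + 1) t - (1 / 2) * a (n - 1) t * P (n - 1) t) =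
        (b 0 t - lam) / 2 * P n t + (a (-1) t) ^ 2 * Q n t :=
  P_evolution_under_toda_flow_general a b ha hb htoda hane lam P Q hP hPrec hQrec hPinit hQinit
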